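/- If q₁,…,qₙ are polynomials over a field of characteristic zero with strictly decreasing degrees d₁ > d₂ > … > dₙ, and the Wronskian W(q₁,…,qₙ) is a nonzero constant, then dᵢ = n − i for each i = 1,…,n. -/

import Mathlib

open Polynomial

/-- The Wronskian of polynomials `p 0, …, p (n-1)`: the determinant of the matrix whose
`(i,j)` entry is the `i`-th derivative of `p j`. -/
noncomputable def polyWronskian {K : Type*} [CommRing K] {n : ℕ} (p : Fin n → K[X]) : K[X] :=
  Matrix.det (Matrix.of fun i j : Fin n => (fun q : K[X] => Polynomial.derivative q)^[(i : ℕ)] (p j))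

/-!
Expanding the Wronskian by the Leibniz formula, every term has degree at most
`∑ dᵢ - n(n-1)/2`, and the coefficient there is `∏ lc(qᵢ)` times the determinant of the
falling factorials `(d_j)^{\underline{i}}`. As `x^{\underline{i}}` is monic of degree `i`, that
matrix is a unitriangular matrix times the transposed Vandermonde matrix of the distinct `dᵢ`,
so the coefficient is nonzero and a constant Wronskian forces `∑ dᵢ ≤ n(n-1)/2`. Strict decrease
gives `dᵢ ≥ n - 1 - i`, and summing shows that all these inequalities are equalities.
-/

open Finset

namespace Polynomial

theorem coeff_prod_sum_of_natDegree_le {R ι : Type*} [CommSemiring R] (s : Finset ι)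
    (f : ι → R[X]) (e : ι → ℕ) (h : ∀ i ∈ s, (f i).natDegree ≤ e i) :
    (∏ i ∈ s, f i).coeff (∑ i ∈ s, e i) = ∏ i ∈ s, (f i).coeff (e i) := by
  classical
  induction s using Finset.induction_on with
  | empty => simp
  | insert a s ha ih =>
    rw [prod_insert ha, sum_insert ha, prod_insert ha,
      coeff_mul_add_eq_of_natDegree_le (h a (mem_insert_self a s)) ((natDegree_prod_le _ _).trans
        (sum_le_sum fun i hi => h i (mem_insert_of_mem hi))),
      ih fun i hi => h i (mem_insert_of_mem hi)]

theorem coeff_iterate_derivative_natDegree_sub {R : Type*} [Semiring R] (p : R[X]) (k : ℕ) :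
    (derivative^[k] p).coeff (p.natDegree - k) = p.natDegree.descFactorial k • p.leadingCoeff := by
  rcases le_or_gt k p.natDegree with hk | hk
  · rw [coeff_iterate_derivative, Nat.sub_add_cancel hk, leadingCoeff]
  · rw [iterate_derivative_eq_zero hk, Nat.descFactorial_eq_zero_iff_lt.mpr hk, coeff_zero,
      zero_smul]

theorem coeff_prod_iterate_derivative {R ι : Type*} [CommSemiring R] (s : Finset ι)
    (p : ι → R[X]) (k : ι → ℕ) :
    (∏ i ∈ s, derivative^[k i] (p i)).coeff (∑ i ∈ s, (p i).natDegree - ∑ i ∈ s, k i) =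
      ∏ i ∈ s, (p i).natDegree.descFactorial (k i) • (p i).leadingCoeff := by
  by_cases hk : ∀ i ∈ s, k i ≤ (p i).natDegree
  · rw [← sum_tsub_distrib s hk, coeff_prod_sum_of_natDegree_le s _ _
      fun i _ => natDegree_iterate_derivative (p i) (k i)]
    exact prod_congr rfl fun i _ => coeff_iterate_derivative_natDegree_sub (p i) (k i)
  · push Not at hk
    obtain ⟨i, hi, hlt⟩ := hk
    rw [prod_eq_zero hi (iterate_derivative_eq_zero hlt), coeff_zero,
      prod_eq_zero hi (by rw [Nat.descFactorial_eq_zero_iff_lt.mpr hlt, zero_smul])]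

end Polynomial

theorem coeff_polyWronskian {R : Type*} [CommRing R] {n : ℕ} (q : Fin n → R[X]) :
    (polyWronskian q).coeff (∑ i, (q i).natDegree - ∑ i : Fin n, (i : ℕ)) =
      (∏ i, (q i).leadingCoeff) *
        (Matrix.of fun i j : Fin n => ((q j).natDegree.descFactorial i : R)).det := by
  rw [polyWronskian, Matrix.det_apply, finsetSum_coeff, Matrix.det_apply, mul_sum]
  refine sum_congr rfl fun σ _ => ?_
  rw [coeff_smul, ← Equiv.sum_comp σ (fun i : Fin n => (i : ℕ))]
  simp only [Matrix.of_apply]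
  rw [coeff_prod_iterate_derivative]
  simp only [nsmul_eq_mul, prod_mul_distrib]
  rw [mul_smul_comm, mul_comm]

theorem det_descFactorial_eq_det_vandermonde {R : Type*} [CommRing R] [IsDomain R] {n : ℕ}
    (a : Fin n → ℕ) :
    (Matrix.of fun i j : Fin n => ((a j).descFactorial i : R)).det =
      (Matrix.vandermonde fun i => (a i : R)).det := by
  rw [Matrix.det_eval_matrixOfPolynomials_eq_det_vandermonde _ (fun i => descPochhammer R i)
    (fun i => descPochhammer_natDegree R i) (fun i => monic_descPochhammer R i),
    ← Matrix.det_transpose]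
  congr 1
  ext i j
  simp [descPochhammer_eval_eq_descFactorial]

theorem Fin.sub_one_sub_le_of_strictAnti {n : ℕ} {d : Fin n → ℕ} (hd : StrictAnti d)
    (i : Fin n) : n - 1 - i ≤ d i := by
  rw [← Fin.card_Ioi]
  calc #(Ioi i) ≤ #(range (d i)) :=
        card_le_card_of_injOn d (fun j hj => by simpa using hd (mem_Ioi.mp hj)) hd.injective.injOn
    _ = d i := card_range _

theorem Fin.sum_sub_one_sub_val (n : ℕ) : ∑ i : Fin n, (n - 1 - (i : ℕ)) = ∑ i : Fin n, (i : ℕ) :=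
  Fintype.sum_equiv Fin.revPerm _ _ fun i => by simp only [Fin.revPerm_apply, Fin.val_rev]; omega

theorem degrees_of_nonzero_const_wronskian_general
    {K : Type*} [Field K] [CharZero K] {n : ℕ} (q : Fin n → K[X]) (d : Fin n → ℕ)
    (hq : ∀ i, q i ≠ 0) (hdeg : ∀ i, (q i).natDegree = d i)
    (hanti : ∀ i j : Fin n, i < j → d j < d i)
    (c : K) (hW : polyWronskian q = C c) :
    ∀ i : Fin n, d i = n - 1 - (i : ℕ) := by
  have hd : StrictAnti d := hanti
  have hcoeff : (polyWronskian q).coeff (∑ i, d i - ∑ i : Fin n, (i : ℕ)) ≠ 0 := by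
    simp only [← hdeg, coeff_polyWronskian, det_descFactorial_eq_det_vandermonde]
    refine mul_ne_zero (prod_ne_zero_iff.mpr fun i _ => leadingCoeff_ne_zero.mpr (hq i)) ?_
    refine Matrix.det_vandermonde_ne_zero_iff.mpr (Nat.cast_injective.comp ?_)
    simpa only [hdeg] using hd.injective
  have hsum : ∑ i, d i ≤ ∑ i : Fin n, (n - 1 - (i : ℕ)) := by
    rw [Fin.sum_sub_one_sub_val, ← Nat.sub_eq_zero_iff_le]
    by_contra hne
    exact hcoeff (hW ▸ coeff_C_of_ne_zero hne)
  have hle := Fin.sub_one_sub_le_of_strictAnti hd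
  intro i
  exact ((sum_eq_sum_iff_of_le fun j _ => hle j).mp
    (le_antisymm (sum_le_sum fun j _ => hle j) hsum) i (mem_univ i)).symm

theorem degrees_of_nonzero_const_wronskian
    {K : Type*} [Field K] [CharZero K] {n : ℕ} (q : Fin n → K[X]) (d : Fin n → ℕ)
    (hq : ∀ i, q i ≠ 0) (hdeg : ∀ i, (q i).natDegree = d i)
    (hanti : ∀ i j : Fin n, i < j → d j < d i)
    (c : K) (hc : c ≠ 0) (hW : polyWronskian q = C c) :
    ∀ i : Fin n, d i = n - 1 - (i : ℕ) :=
  degrees_of_nonzero_const_wronskian_general q d hq hdeg hanti c hW
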